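/- If X ~ Bin(m, r) with r > 0, then E[log(m·r/(X+1))] ≤ log(m/(m+1)) < 0. -/
import Mathlib


open Finset

/-- pmf of Bin(m,r) at i -/
noncomputable def binomPMF (m : ℕ) (r : ℝ) (i : ℕ) : ℝ :=
  (m.choose i : ℝ) * r ^ i * (1 - r) ^ (m - i)

/-- expectation of f(X) for X ~ Bin(m,r) -/
noncomputable def binomExp (m : ℕ) (r : ℝ) (f : ℕ → ℝ) : ℝ :=
  ∑ i ∈ Finset.range (m + 1), binomPMF m r i * f i

lemma binomPMF_nonneg (m : ℕ) {r : ℝ} (hr : 0 ≤ r) (hr1 : r ≤ 1) (i : ℕ) :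
    0 ≤ binomPMF m r i := by
  unfold binomPMF
  have h1 : (0:ℝ) ≤ 1 - r := by linarith
  positivity

lemma binomPMF_sum (m : ℕ) (r : ℝ) : ∑ i ∈ range (m+1), binomPMF m r i = 1 := by
  have h := add_pow r (1 - r) m
  simp only [add_sub_cancel, one_pow] at h
  rw [eq_comm] at h
  rw [← h]
  apply Finset.sum_congr rfl
  intro i _
  unfold binomPMF
  ring

lemma binom_key (m i : ℕ) (hi : i ≤ m) (r : ℝ) :
    binomPMF m r i * ((m:ℝ) * r / ((i:ℝ)+1)) =
    (m:ℝ)/((m:ℝ)+1) * binomPMF (m+1) r (i+1) := by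
  unfold binomPMF
  have h := Nat.add_one_mul_choose_eq m i
  have hcast : ((m:ℝ)+1) * (m.choose i : ℝ) = ((m+1).choose (i+1) : ℝ) * ((i:ℝ)+1) := by
    exact_mod_cast congrArg (Nat.cast (R := ℝ)) h
  have hsub : m + 1 - (i+1) = m - i := by omega
  rw [hsub]
  have hi1 : ((i:ℝ)+1) ≠ 0 := by positivity
  have hm1 : ((m:ℝ)+1) ≠ 0 := by positivity
  field_simp
  linear_combination (r^(i+1) * (1-r)^(m-i) * (m:ℝ)) * hcast

theorem binom_log_reciprocal_neg (m : ℕ) (hm : 0 < m) (r : ℝ) (hr : 0 < r) (hr1 : r ≤ 1) :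
    binomExp m r (fun i => Real.log ((m : ℝ) * r / ((i : ℝ) + 1))) ≤
        Real.log ((m : ℝ) / ((m : ℝ) + 1)) ∧
    Real.log ((m : ℝ) / ((m : ℝ) + 1)) < 0 := by
  have hm0 : (0:ℝ) < m := by exact_mod_cast hm
  have hr0 : (0:ℝ) ≤ r := le_of_lt hr
  have hwnn : ∀ i ∈ range (m+1), 0 ≤ binomPMF m r i := fun i _ => binomPMF_nonneg m hr0 hr1 i
  have hwsum : ∑ i ∈ range (m+1), binomPMF m r i = 1 := binomPMF_sum m r
  set p : ℕ → ℝ := fun i => (m:ℝ) * r / ((i:ℝ)+1) with hp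
  have hpmem : ∀ i ∈ range (m+1), p i ∈ Set.Ioi (0:ℝ) := by
    intro i _
    have : (0:ℝ) < (i:ℝ) + 1 := by positivity
    exact div_pos (by positivity) this
  -- Jensen
  have hjensen := strictConcaveOn_log_Ioi.concaveOn.le_map_sum hwnn hwsum hpmem
  simp only [smul_eq_mul] at hjensen
  -- the inner sum bound
  have hS : ∑ i ∈ range (m+1), binomPMF m r i * p i ≤ (m:ℝ) / ((m:ℝ)+1) := by
    have heq : ∑ i ∈ range (m+1), binomPMF m r i * p i
        = (m:ℝ)/((m:ℝ)+1) * ∑ i ∈ range (m+1), binomPMF (m+1) r (i+1) := by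
      rw [Finset.mul_sum]
      apply Finset.sum_congr rfl
      intro i hi
      exact binom_key m i (by simpa using Nat.lt_succ_iff.mp (Finset.mem_range.mp hi)) r
    rw [heq]
    have h1 : ∑ i ∈ range (m+1), binomPMF (m+1) r (i+1) ≤ 1 := by
      have h2 := binomPMF_sum (m+1) r
      rw [Finset.sum_range_succ'] at h2
      have h0 : 0 ≤ binomPMF (m+1) r 0 := binomPMF_nonneg (m+1) hr0 hr1 0
      linarith
    nlinarith [div_nonneg (le_of_lt hm0) (by positivity : (0:ℝ) ≤ (m:ℝ)+1)]
  have hSpos : 0 < ∑ i ∈ range (m+1), binomPMF m r i * p i := by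
    apply Finset.sum_pos'
    · intro i hi
      exact mul_nonneg (hwnn i hi) (le_of_lt (hpmem i hi))
    · refine ⟨m, Finset.mem_range.mpr (Nat.lt_succ_self m), ?_⟩
      apply mul_pos _ (hpmem m (Finset.mem_range.mpr (Nat.lt_succ_self m)))
      unfold binomPMF
      simp only [Nat.choose_self, Nat.sub_self, pow_zero, Nat.cast_one, one_mul, mul_one]
      positivity
  constructor
  · have hEq : binomExp m r (fun i => Real.log ((m : ℝ) * r / ((i : ℝ) + 1)))
        = ∑ i ∈ range (m+1), binomPMF m r i * Real.log (p i) := rfl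
    calc binomExp m r (fun i => Real.log ((m : ℝ) * r / ((i : ℝ) + 1)))
        ≤ Real.log (∑ i ∈ range (m+1), binomPMF m r i * p i) := hEq ▸ hjensen
      _ ≤ Real.log ((m:ℝ) / ((m:ℝ)+1)) := Real.log_le_log hSpos hS
  · apply Real.log_neg
    · positivity
    · rw [div_lt_one (by positivity)]
      linarith
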